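/- arXiv:1603.01635 — 3 statements merged into one kernel-verified Lean document; each statement's English description precedes it below -/
import Mathlib

section
/- The restricted inverse cleans ancillas (uncompute correctness): let C be a well-formed reversible circuit and A a set of bit indices such that A ∩ controls(C) = ∅. Let uncompute(C, A) be obtained by reversing the gates of C and deleting every gate whose target lies in A. Then for every state s and every index i ∉ A, (eval (C ++ uncompute(C, A)) s)(i) = s(i). -/
inductive BExp where
  | bfalse : BExp
  | btrue : BExp
  | var (i : ℕ) : BExp
  | bxor (a b : BExp) : BExp
  | band (a b : BExp) : BExp

def BExp.eval : BExp → (ℕ → Bool) → Bool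
  | .bfalse, _ => false
  | .btrue, _ => true
  | .var i, s => s i
  | .bxor a b, s => xor (a.eval s) (b.eval s)
  | .band a b, s => (a.eval s) && (b.eval s)

def BExp.vars : BExp → Finset ℕ
  | .bfalse => ∅
  | .btrue => ∅
  | .var i => {i}
  | .bxor a b => a.vars ∪ b.vars
  | .band a b => a.vars ∪ b.vars

inductive Gate where
  | NOT (i : ℕ) : Gate
  | CNOT (i j : ℕ) : Gate
  | TOF (i j k : ℕ) : Gate

def applyGate : Gate → (ℕ → Bool) → (ℕ → Bool)
  | .NOT i, s => Function.update s i (! s i)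
  | .CNOT i j, s => Function.update s j (xor (s i) (s j))
  | .TOF i j k, s => Function.update s k (xor (s i && s j) (s k))

def evalCirc : List Gate → (ℕ → Bool) → (ℕ → Bool)
  | [], s => s
  | g :: C, s => evalCirc C (applyGate g s)

def Gate.target : Gate → ℕ
  | .NOT i => i
  | .CNOT _ j => j
  | .TOF _ _ k => k

def Gate.controls : Gate → Finset ℕ
  | .NOT _ => ∅
  | .CNOT i _ => {i}
  | .TOF i j _ => {i, j}

def Gate.wf : Gate → Prop
  | .NOT _ => True
  | .CNOT i j => i ≠ j
  | .TOF i j k => i ≠ j ∧ i ≠ k ∧ j ≠ k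

def circWf (C : List Gate) : Prop := ∀ g ∈ C, g.wf

def mods (C : List Gate) : Finset ℕ := (C.map Gate.target).toFinset

def controls (C : List Gate) : Finset ℕ := C.foldr (fun g A => g.controls ∪ A) ∅

def uncompute (C : List Gate) (A : Finset ℕ) : List Gate :=
  C.filter (fun g => g.target ∉ A)


/-! Induct on `C`, peeling off its first gate `g`. If the target of `g` lies in `A`, then `g` is
dropped from the inverse and changes only a bit in `A`. Otherwise `g` is the last gate of the
inverse; by induction the state just before it agrees with `applyGate g s` outside `A`, and since `g`
reads only bits outside `A` and is an involution, it restores `s` there. -/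

lemma evalCirc_append (C D : List Gate) (s : ℕ → Bool) :
    evalCirc (C ++ D) s = evalCirc D (evalCirc C s) := by
  induction C generalizing s with
  | nil => rfl
  | cons g C ih => exact ih (applyGate g s)

lemma evalCirc_cons (g : Gate) (C : List Gate) (s : ℕ → Bool) :
    evalCirc (g :: C) s = evalCirc C (applyGate g s) :=
  rfl

lemma controls_cons (g : Gate) (C : List Gate) : controls (g :: C) = g.controls ∪ controls C :=
  rfl

lemma uncompute_cons_of_mem {g : Gate} {A : Finset ℕ} (h : g.target ∈ A) (C : List Gate) :
    uncompute (g :: C) A = uncompute C A := by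
  simp [uncompute, h]

lemma uncompute_cons_of_notMem {g : Gate} {A : Finset ℕ} (h : g.target ∉ A) (C : List Gate) :
    uncompute (g :: C) A = g :: uncompute C A := by
  simp [uncompute, h]

lemma applyGate_of_ne_target {g : Gate} {j : ℕ} (h : j ≠ g.target) (s : ℕ → Bool) :
    applyGate g s j = s j := by
  cases g <;> exact Function.update_of_ne h _ _

lemma applyGate_involutive {g : Gate} (hg : g.wf) : Function.Involutive (applyGate g) := by
  intro s
  cases g with
  | NOT t => simp [applyGate]
  | CNOT c t => simp [applyGate, Function.update_of_ne (show c ≠ t from hg)]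
  | TOF a b t =>
    obtain ⟨-, hat, hbt⟩ := hg
    simp [applyGate, Function.update_of_ne hat, Function.update_of_ne hbt]

lemma applyGate_eqOn {g : Gate} {S : Set ℕ} (hg : ↑g.controls ⊆ S) {u v : ℕ → Bool}
    (h : S.EqOn u v) : S.EqOn (applyGate g u) (applyGate g v) := by
  intro j hj
  have hu : u j = v j := h hj
  cases g with
  | NOT t =>
    simp only [applyGate, Function.update_apply]
    split_ifs with hjt
    · subst hjt; rw [hu]
    · exact hu
  | CNOT c t =>
    have hc : u c = v c := h (hg (by simp [Gate.controls]))
    simp only [applyGate, Function.update_apply]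
    split_ifs with hjt
    · subst hjt; rw [hu, hc]
    · exact hu
  | TOF a b t =>
    have ha : u a = v a := h (hg (by simp [Gate.controls]))
    have hb : u b = v b := h (hg (by simp [Gate.controls]))
    simp only [applyGate, Function.update_apply]
    split_ifs with hjt
    · subst hjt; rw [hu, ha, hb]
    · exact hu

theorem uncompute_correct (C : List Gate) (A : Finset ℕ) (hC : circWf C)
    (hA : ∀ i ∈ A, i ∉ controls C) (s : ℕ → Bool) (i : ℕ) (hi : i ∉ A) :
    evalCirc (C ++ (uncompute C A).reverse) s i = s i := by
  induction C generalizing s i with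
  | nil => rfl
  | cons g C ih =>
    simp only [controls_cons, Finset.mem_union, not_or] at hA
    have ih' := ih (fun g' hg' => hC g' (List.mem_cons_of_mem _ hg')) (fun j hj => (hA j hj).2)
    by_cases ht : g.target ∈ A
    · rw [uncompute_cons_of_mem ht, List.cons_append, evalCirc_cons, ih' _ _ hi,
        applyGate_of_ne_target (ne_of_mem_of_not_mem ht hi).symm]
    · have hgc : ↑g.controls ⊆ {j | j ∉ A} := fun j hj hjA => (hA j hjA).1 hj
      rw [uncompute_cons_of_notMem ht, List.reverse_cons, ← List.append_assoc, evalCirc_append,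
        List.cons_append, evalCirc_cons]
      calc applyGate g (evalCirc (C ++ (uncompute C A).reverse) (applyGate g s)) i
          = applyGate g (applyGate g s) i := applyGate_eqOn hgc (fun j hj => ih' _ j hj) hi
        _ = s i := by rw [applyGate_involutive (hC g List.mem_cons_self)]
end

section
/- Correctness of XOR-factoring: if factorAs(B, i) = some B', where factorAs attempts to rewrite B as (var i) ⊕ B' with i not occurring in B', then indeed i ∉ vars(B') and for every state s, eval B s = s(i) XOR eval B' s. -/
def factorAs : BExp → ℕ → Option BExp
  | .bfalse, _ => none
  | .btrue, _ => none
  | .var j, i => if j = i then some .bfalse else none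
  | .band _ _, _ => none
  | .bxor a b, i =>
    match factorAs a i with
    | some a' => if i ∈ b.vars then none else some (.bxor a' b)
    | none =>
      match factorAs b i with
      | some b' => if i ∈ a.vars then none else some (.bxor a b')
      | none => none

theorem factorAs_var_eq_some {j i : ℕ} {B' : BExp} :
    factorAs (.var j) i = some B' ↔ j = i ∧ B' = .bfalse := by
  by_cases hji : j = i <;> simp [factorAs, hji, eq_comm]

theorem factorAs_bxor_eq_some {a b B' : BExp} {i : ℕ} :
    factorAs (.bxor a b) i = some B' ↔
      (∃ a', factorAs a i = some a' ∧ i ∉ b.vars ∧ B' = .bxor a' b) ∨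
      (factorAs a i = none ∧
        ∃ b', factorAs b i = some b' ∧ i ∉ a.vars ∧ B' = .bxor a b') := by
  cases ha : factorAs a i <;> cases hb : factorAs b i <;>
    by_cases hia : i ∈ a.vars <;> by_cases hib : i ∈ b.vars <;>
    simp [factorAs, ha, hb, hia, hib, eq_comm]

theorem factorAs_correct (B : BExp) (i : ℕ) (B' : BExp)
    (h : factorAs B i = some B') :
    i ∉ B'.vars ∧ ∀ s : ℕ → Bool, B.eval s = xor (s i) (B'.eval s) := by
  induction B generalizing B' with
  | var j =>
    obtain ⟨rfl, rfl⟩ := factorAs_var_eq_some.1 h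
    exact ⟨by simp [BExp.vars], fun s => by simp [BExp.eval]⟩
  | bxor a b iha ihb =>
    rcases factorAs_bxor_eq_some.1 h with ⟨a', ha, hib, rfl⟩ | ⟨-, b', hb, hia, rfl⟩
    · obtain ⟨hia', heval⟩ := iha a' ha
      exact ⟨by simp [BExp.vars, hia', hib],
        fun s => by simp only [BExp.eval, heval, Bool.xor_assoc]⟩
    · obtain ⟨hib', heval⟩ := ihb b' hb
      exact ⟨by simp [BExp.vars, hia, hib'],
        fun s => by simp only [BExp.eval, heval, Bool.xor_left_comm]⟩
  | bfalse | btrue | band => simp [factorAs] at h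
end

section
/- Distribution to ESOP form preserves semantics: the function dist that recursively rewrites Boolean expressions by distributing AND over XOR (e.g., (a ⊕ b) ∧ c ↦ (a ∧ c) ⊕ (b ∧ c) and (a ⊕ b) ∧ (c ⊕ d) ↦ (a∧c) ⊕ (a∧d) ⊕ (b∧c) ⊕ (b∧d)) satisfies eval (dist B) s = eval B s for all B and all states s. -/
def dist : BExp → BExp
  | .bxor a b => .bxor (dist a) (dist b)
  | .band a b =>
    match dist a, dist b with
    | .bxor a1 a2, .bxor b1 b2 =>
        .bxor (.bxor (.band a1 b1) (.band a1 b2))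
              (.bxor (.band a2 b1) (.band a2 b2))
    | .bxor a1 a2, b' => .bxor (.band a1 b') (.band a2 b')
    | a', .bxor b1 b2 => .bxor (.band a' b1) (.band a' b2)
    | a', b' => .band a' b'
  | e => e

-- Every branch of the match is `∧`-over-`⊕` distributivity, up to reassociating `⊕`.
theorem eval_dist_band (a b : BExp) (s : ℕ → Bool) :
    (dist (.band a b)).eval s = ((dist a).eval s && (dist b).eval s) := by
  rw [_root_.dist]
  split <;> simp only [*, BExp.eval, Bool.and_xor_distrib_left, Bool.and_xor_distrib_right,
    Bool.xor_assoc, Bool.xor_left_comm]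

theorem dist_preserves_semantics (B : BExp) (s : ℕ → Bool) :
    (dist B).eval s = B.eval s := by
  induction B with
  | bfalse | btrue | var => rfl
  | bxor a b iha ihb => simp only [_root_.dist, BExp.eval, iha, ihb]
  | band a b iha ihb => rw [eval_dist_band, iha, ihb, BExp.eval]
end
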